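/- Let c be the real cube root of 3, and for real Λ ≥ 1 and ρ ∈ ℝ set a₋(ρ) := −2Λ⁹ + cΛρ, C(ρ) := (3/4)Λ¹² − cΛ⁴ρ, and Θ̂₋(z) := (Λ³z)⁴/4 − (3Λ⁶/2)(Λ³z)² − a₋(ρ)·Λ³z − C(ρ) for z ∈ ℂ. Then there exists Λ₀ ≥ 1 such that for all Λ ≥ Λ₀, all ρ ∈ ℝ, both signs ε ∈ {+1,−1}, and all t ≥ 0, writing z_t := 1 + Λ^{−3} e^{2iεπ/3} + iεt: −Re Θ̂₋(z_t) ≤ −(Λ¹²/4) t⁴ − Λ³ − (c/2)Λρ + 1/8. Consequently, for every K₁ ∈ ℝ, all ρ ≥ K₁ and every real p ≥ 1, ( 2∫₀^∞ exp( −p · Re Θ̂₋(z_t) ) dt )^{1/p} ≤ e^{−Λ³ − (c/2)K₁Λ + 1/8} for all Λ ≥ Λ₀. -/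

import Mathlib

open Complex Real MeasureTheory

/-- The rescaled, recentered Pearcey phase
`Θ̂₋(z) = Θ_{a₋(ρ)}(3Λ⁶; Λ³z) − C(ρ)` with `a₋(ρ) = −2Λ⁹ + cΛρ` and
`C(ρ) = (3/4)Λ¹² − cΛ⁴ρ`. -/
noncomputable def thetaHatMinus (c Λ ρ : ℝ) (z : ℂ) : ℂ :=
  ((Λ : ℂ) ^ 3 * z) ^ 4 / 4 - ((3 * (Λ : ℂ) ^ 6) / 2) * ((Λ : ℂ) ^ 3 * z) ^ 2
    - ((-2 * Λ ^ 9 + c * Λ * ρ : ℝ) : ℂ) * ((Λ : ℂ) ^ 3 * z)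
    - ((3 / 4 * Λ ^ 12 - c * Λ ^ 4 * ρ : ℝ) : ℂ)

lemma pearcey_re_eval (c Λ ρ x y X Y : ℝ) (hX : Λ^3 * x = X) (hY : Λ^3 * y = Y) :
    (thetaHatMinus c Λ ρ ((x:ℂ) + (y:ℂ)*I)).re =
      (X^4 - 6*X^2*Y^2 + Y^4)/4 - (3*Λ^6/2)*(X^2 - Y^2)
        - (-2*Λ^9 + c*Λ*ρ)*X - (3/4*Λ^12 - c*Λ^4*ρ) := by
  subst hX hY
  have h1 : ((Λ:ℂ))^3 * ((x:ℂ) + (y:ℂ)*I) = ((Λ^3*x : ℝ):ℂ) + ((Λ^3*y : ℝ):ℂ)*I := by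
    push_cast; ring
  rw [thetaHatMinus, h1]
  simp [Complex.add_re, Complex.mul_re, Complex.div_re, Complex.sub_re, pow_succ,
    Complex.mul_im, Complex.add_im, Complex.normSq_apply]
  ring

lemma pearcey_exp_eval (ε : ℝ) (hε : ε = 1 ∨ ε = -1) :
    Complex.exp (2 * I * (ε:ℂ) * (π:ℂ) / 3)
      = ((-1/2 : ℝ) : ℂ) + ((ε * (Real.sqrt 3 / 2) : ℝ) : ℂ) * I := by
  have hc : Real.cos (2*π/3) = -(1/2) := by
    have h : (2*π/3 : ℝ) = π - π/3 := by ring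
    rw [h, Real.cos_pi_sub, Real.cos_pi_div_three]
  have hs : Real.sin (2*π/3) = Real.sqrt 3 / 2 := by
    have h : (2*π/3 : ℝ) = π - π/3 := by ring
    rw [h, Real.sin_pi_sub, Real.sin_pi_div_three]
  rcases hε with h | h <;> subst h
  · have h2 : 2 * I * (((1:ℝ)):ℂ) * (π:ℂ) / 3 = ((2*π/3 : ℝ):ℂ) * I := by push_cast; ring
    rw [h2, Complex.exp_mul_I, ← Complex.ofReal_cos, ← Complex.ofReal_sin, hc, hs]
    push_cast; ring
  · have h2 : 2 * I * (((-1:ℝ)):ℂ) * (π:ℂ) / 3 = ((-(2*π/3) : ℝ):ℂ) * I := by push_cast; ring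
    rw [h2, Complex.exp_mul_I, ← Complex.ofReal_cos, ← Complex.ofReal_sin,
      Real.cos_neg, Real.sin_neg, hc, hs]
    push_cast; ring

lemma pearcey_main_re (c Λ ρ ε t : ℝ) (hΛ : 1 ≤ Λ) (hε : ε = 1 ∨ ε = -1) (ht : 0 ≤ t) :
    Λ^12/4 * t^4 + Λ^3*t + Λ^3 + c/2*Λ*ρ - 1/8 ≤
      (thetaHatMinus c Λ ρ
        (1 + ((Λ⁻¹ ^ 3 : ℝ) : ℂ) * Complex.exp (2 * I * (ε : ℂ) * (π : ℂ) / 3)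
          + I * (ε : ℂ) * (t : ℂ))).re := by
  have hΛ0 : (0:ℝ) < Λ := lt_of_lt_of_le one_pos hΛ
  have hΛne : Λ ≠ 0 := ne_of_gt hΛ0
  set r := Real.sqrt 3 with hrdef
  have hr3 : r^2 = 3 := Real.sq_sqrt (by norm_num)
  have hr1 : 1 ≤ r := by nlinarith [Real.sqrt_nonneg 3]
  have hz : (1 + ((Λ⁻¹ ^ 3 : ℝ) : ℂ) * Complex.exp (2 * I * (ε : ℂ) * (π : ℂ) / 3)
          + I * (ε : ℂ) * (t : ℂ))
      = (((1 - Λ⁻¹^3/2 : ℝ)) : ℂ) + ((ε * (Λ⁻¹^3 * r / 2 + t) : ℝ) : ℂ) * I := by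
    rw [pearcey_exp_eval ε hε]; push_cast; ring
  have hX : Λ^3 * (1 - Λ⁻¹^3/2) = Λ^3 - 1/2 := by field_simp
  have hY : Λ^3 * (ε * (Λ⁻¹^3 * r / 2 + t)) = ε * (r/2 + Λ^3*t) := by field_simp
  rw [hz, pearcey_re_eval c Λ ρ _ _ _ _ hX hY]
  have hY2 : (ε * (r/2 + Λ^3*t))^2 = (r/2 + Λ^3*t)^2 := by
    rcases hε with h | h <;> rw [h] <;> ring
  have hY4 : (ε * (r/2 + Λ^3*t))^4 = (r/2 + Λ^3*t)^4 := by
    rcases hε with h | h <;> rw [h] <;> ring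
  rw [hY2, hY4]
  have key : ((Λ^3 - 1/2)^4 - 6*(Λ^3 - 1/2)^2*(r/2 + Λ^3*t)^2 + (r/2 + Λ^3*t)^4)/4
        - (3*Λ^6/2)*((Λ^3 - 1/2)^2 - (r/2 + Λ^3*t)^2)
        - (-2*Λ^9 + c*Λ*ρ)*(Λ^3 - 1/2) - (3/4*Λ^12 - c*Λ^4*ρ)
        - (Λ^12/4 * t^4 + Λ^3*t + Λ^3 + c/2*Λ*ρ - 1/8)
      = (Λ^3*t) * (-1 + 3/4*(Λ^3*t) + r/2*(Λ^3*t)^2 + 3*r/2*Λ^3 + 3/2*Λ^3*(Λ^3*t)) := by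
    linear_combination (3/8*Λ^3 + (1/64)*(r^2-3) + r/8*Λ^3*t + 3/8*Λ^6*t^2) * hr3
  have hs : 0 ≤ Λ^3*t := by positivity
  have hQ : 0 ≤ -1 + 3/4*(Λ^3*t) + r/2*(Λ^3*t)^2 + 3*r/2*Λ^3 + 3/2*Λ^3*(Λ^3*t) := by
    have hΛ3 : (1:ℝ) ≤ Λ^3 := one_le_pow₀ hΛ
    have h11 : (1:ℝ) * 1 ≤ r * Λ^3 := mul_le_mul hr1 hΛ3 one_pos.le (by linarith)
    have hrs2 : 0 ≤ r * (Λ^3*t)^2 := mul_nonneg (by linarith) (sq_nonneg _)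
    have hLs : 0 ≤ Λ^3 * (Λ^3*t) := mul_nonneg (by positivity) hs
    nlinarith [h11, hrs2, hLs, hs]
  nlinarith [mul_nonneg hs hQ]

open Set in
lemma pearcey_int_exp (b : ℝ) (hb : 0 < b) :
    ∫ t in Ioi (0:ℝ), Real.exp (-(b*t)) = b⁻¹ := by
  have h := integral_comp_mul_left_Ioi (fun x => Real.exp (-x)) 0 hb
  simp only [mul_zero, integral_exp_neg_Ioi, neg_zero, Real.exp_zero, smul_eq_mul, mul_one] at h
  simpa using h

lemma pearcey_cont (c Λ ρ p ε : ℝ) : Continuous (fun t : ℝ => Real.exp (-p *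
      (thetaHatMinus c Λ ρ (1 + ((Λ⁻¹ ^ 3 : ℝ) : ℂ) * Complex.exp (2 * I * (ε : ℂ) * (π : ℂ) / 3)
        + I * (ε : ℂ) * (t : ℂ))).re)) := by
  unfold thetaHatMinus; fun_prop

set_option maxHeartbeats 1000000 in
/-- Lemma 5.9 of the paper: on the vertical rays `γ_{0,R,e}` parametrized by
`z_t = 1 + Λ^{−3}e^{±2iπ/3} ± it`, `t ≥ 0`, one has
`−Re Θ̂₋(z_t) ≤ −(Λ¹²/4)t⁴ − Λ³ − (c/2)Λρ + 1/8` for all large `Λ`; hence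
`e^{−Θ̂₋}` is exponentially small in every `L^p` norm, uniformly in `ρ ≥ K₁`. -/
theorem stmt14 (c : ℝ) (hc3 : c ^ 3 = 3) (hc : 0 < c) :
    ∃ Λ₀ : ℝ, 1 ≤ Λ₀ ∧ ∀ Λ : ℝ, Λ₀ ≤ Λ →
      (∀ ρ : ℝ, ∀ ε : ℝ, (ε = 1 ∨ ε = -1) → ∀ t : ℝ, 0 ≤ t →
        -(thetaHatMinus c Λ ρ
            (1 + ((Λ⁻¹ ^ 3 : ℝ) : ℂ) * Complex.exp (2 * I * (ε : ℂ) * (π : ℂ) / 3)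
              + I * (ε : ℂ) * (t : ℂ))).re
          ≤ -(Λ ^ 12 / 4) * t ^ 4 - Λ ^ 3 - (c / 2) * Λ * ρ + 1 / 8) ∧
      (∀ K₁ ρ : ℝ, K₁ ≤ ρ → ∀ p : ℝ, 1 ≤ p → ∀ ε : ℝ, (ε = 1 ∨ ε = -1) →
        (2 * ∫ t in Set.Ioi (0 : ℝ),
            Real.exp (-p * (thetaHatMinus c Λ ρ
              (1 + ((Λ⁻¹ ^ 3 : ℝ) : ℂ) * Complex.exp (2 * I * (ε : ℂ) * (π : ℂ) / 3)
                + I * (ε : ℂ) * (t : ℂ))).re))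
          ^ (1 / p)
          ≤ Real.exp (-Λ ^ 3 - (c / 2) * K₁ * Λ + 1 / 8)) := by
  refine ⟨2, by norm_num, fun Λ hΛ2 => ?_⟩
  have hΛ1 : (1:ℝ) ≤ Λ := by linarith
  have hΛ0 : (0:ℝ) < Λ := by linarith
  constructor
  · intro ρ ε hε t ht
    have h := pearcey_main_re c Λ ρ ε t hΛ1 hε ht
    have hs : 0 ≤ Λ^3*t := by positivity
    linarith
  · intro K₁ ρ hK p hp ε hε
    have hp0 : (0:ℝ) < p := by linarith
    have hΛ3 : (8:ℝ) ≤ Λ^3 := by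
      calc (8:ℝ) = 2^3 := by norm_num
        _ ≤ Λ^3 := pow_le_pow_left₀ (by norm_num) hΛ2 3
    set B : ℝ := Λ^3 + c/2*Λ*ρ - 1/8 with hB
    set f : ℝ → ℝ := fun t => Real.exp (-p * (thetaHatMinus c Λ ρ
        (1 + ((Λ⁻¹ ^ 3 : ℝ) : ℂ) * Complex.exp (2 * I * (ε : ℂ) * (π : ℂ) / 3)
          + I * (ε : ℂ) * (t : ℂ))).re) with hf
    set g : ℝ → ℝ := fun t => Real.exp (-(p*B)) * Real.exp (-(p*Λ^3) * t) with hg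
    have hpL : (0:ℝ) < p*Λ^3 := by positivity
    have hfg : ∀ t ∈ Set.Ioi (0:ℝ), f t ≤ g t := by
      intro t ht
      have ht0 : (0:ℝ) ≤ t := le_of_lt ht
      have h := pearcey_main_re c Λ ρ ε t hΛ1 hε ht0
      have h4 : 0 ≤ Λ^12/4 * t^4 := by positivity
      have : -p * (thetaHatMinus c Λ ρ
          (1 + ((Λ⁻¹ ^ 3 : ℝ) : ℂ) * Complex.exp (2 * I * (ε : ℂ) * (π : ℂ) / 3)
            + I * (ε : ℂ) * (t : ℂ))).re ≤ -(p*B) + -(p*Λ^3) * t := by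
        have hle : Λ^3*t + B ≤ (thetaHatMinus c Λ ρ
            (1 + ((Λ⁻¹ ^ 3 : ℝ) : ℂ) * Complex.exp (2 * I * (ε : ℂ) * (π : ℂ) / 3)
              + I * (ε : ℂ) * (t : ℂ))).re := by rw [hB]; linarith
        nlinarith [mul_le_mul_of_nonneg_left hle (le_of_lt hp0)]
      calc f t = Real.exp (-p * (thetaHatMinus c Λ ρ _).re) := rfl
        _ ≤ Real.exp (-(p*B) + -(p*Λ^3) * t) := Real.exp_le_exp.mpr this
        _ = g t := by rw [Real.exp_add]
    have hgint : IntegrableOn g (Set.Ioi (0:ℝ)) := by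
      exact (exp_neg_integrableOn_Ioi 0 hpL).const_mul _
    have hcont : Continuous f := pearcey_cont c Λ ρ p ε
    have hfint : IntegrableOn f (Set.Ioi (0:ℝ)) := by
      refine MeasureTheory.Integrable.mono hgint hcont.aestronglyMeasurable.restrict ?_
      filter_upwards [ae_restrict_mem measurableSet_Ioi] with t ht
      have h1 := hfg t ht
      have h2 : 0 ≤ f t := le_of_lt (Real.exp_pos _)
      rw [Real.norm_eq_abs, Real.norm_eq_abs, _root_.abs_of_nonneg h2,
        _root_.abs_of_nonneg (le_trans h2 h1)]
      exact h1
    have hint_le : (∫ t in Set.Ioi (0:ℝ), f t) ≤ ∫ t in Set.Ioi (0:ℝ), g t :=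
      setIntegral_mono_on hfint hgint measurableSet_Ioi hfg
    have hgval : (∫ t in Set.Ioi (0:ℝ), g t) = Real.exp (-(p*B)) * (p*Λ^3)⁻¹ := by
      rw [hg]
      simp only [neg_mul]
      rw [MeasureTheory.integral_const_mul, pearcey_int_exp _ hpL]
    have hfnn : 0 ≤ ∫ t in Set.Ioi (0:ℝ), f t :=
      setIntegral_nonneg measurableSet_Ioi (fun t _ => le_of_lt (Real.exp_pos _))
    have h2int : 2 * (∫ t in Set.Ioi (0:ℝ), f t) ≤ Real.exp (-(p*B)) := by
      have hinv : (p*Λ^3)⁻¹ ≤ 1/2 := by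
        rw [inv_le_iff_one_le_mul₀ hpL]  -- may need fix
        nlinarith
      calc 2 * (∫ t in Set.Ioi (0:ℝ), f t) ≤ 2 * (Real.exp (-(p*B)) * (p*Λ^3)⁻¹) := by
            rw [← hgval] at *; linarith
        _ ≤ 2 * (Real.exp (-(p*B)) * (1/2)) := by
            have := Real.exp_pos (-(p*B))
            nlinarith
        _ = Real.exp (-(p*B)) := by ring
    have hrpow : (2 * ∫ t in Set.Ioi (0:ℝ), f t) ^ (1/p) ≤ (Real.exp (-(p*B))) ^ (1/p) :=
      Real.rpow_le_rpow (by linarith) h2int (by positivity)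
    have hexp_rpow : (Real.exp (-(p*B))) ^ (1/p) = Real.exp (-B) := by
      rw [← Real.exp_mul]
      congr 1
      field_simp
    refine le_trans hrpow ?_
    rw [hexp_rpow]
    apply Real.exp_le_exp.mpr
    have : c/2*Λ*K₁ ≤ c/2*Λ*ρ := by
      apply mul_le_mul_of_nonneg_left hK
      positivity
    rw [hB]; linarith
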